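/- arXiv:2505.18752 — 2 statements merged into one kernel-verified Lean document; each statement's English description precedes it below -/
import Mathlib

section
/- (Theorem 1, inequality) If E y_A ≠ E y_B, then Acc ≤ S*. -/
open Finset

/-- The separability of the hidden states `h` (with labels `y`, label tokens `yA`, `yB`)
along the direction `u`. -/
noncomputable def sep {d n : ℕ} {V : Type*} [DecidableEq V]
    (h : Fin n → EuclideanSpace ℝ (Fin d)) (y : Fin n → V) (yA yB : V)
    (u : EuclideanSpace ℝ (Fin d)) : ℝ :=
  (1 / (n : ℝ)) *
    (((univ.filter fun i => y i = yA ∧ 0 ≤ (inner ℝ u (h i) : ℝ)).card : ℝ) +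
     ((univ.filter fun i => y i = yB ∧ (inner ℝ u (h i) : ℝ) < 0).card : ℝ))

/-- Index `i` is correctly classified (ties broken toward `yA`): either `y i = yA` and
`⟪E yA, h i⟫ ≥ ⟪E v, h i⟫` for all `v`, or `y i = yB` and `⟪E yB, h i⟫ ≥ ⟪E v, h i⟫`
for all `v` together with `⟪E yB, h i⟫ > ⟪E yA, h i⟫`. -/
def correct {d n : ℕ} {V : Type*} (E : V → EuclideanSpace ℝ (Fin d))
    (h : Fin n → EuclideanSpace ℝ (Fin d)) (y : Fin n → V) (yA yB : V)
    (i : Fin n) : Prop :=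
  (y i = yA ∧ ∀ v : V, (inner ℝ (E v) (h i) : ℝ) ≤ (inner ℝ (E yA) (h i) : ℝ)) ∨
  (y i = yB ∧ (∀ v : V, (inner ℝ (E v) (h i) : ℝ) ≤ (inner ℝ (E yB) (h i) : ℝ)) ∧
    (inner ℝ (E yA) (h i) : ℝ) < (inner ℝ (E yB) (h i) : ℝ))

noncomputable instance {d n : ℕ} {V : Type*} [Fintype V] [DecidableEq V]
    (E : V → EuclideanSpace ℝ (Fin d)) (h : Fin n → EuclideanSpace ℝ (Fin d))
    (y : Fin n → V) (yA yB : V) : DecidablePred (correct E h y yA yB) := fun i => by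
  unfold correct; infer_instance

/-- The accuracy `Acc = (1/n) · |{i | i is correctly classified}|`. -/
noncomputable def acc {d n : ℕ} {V : Type*} [Fintype V] [DecidableEq V]
    (E : V → EuclideanSpace ℝ (Fin d)) (h : Fin n → EuclideanSpace ℝ (Fin d))
    (y : Fin n → V) (yA yB : V) : ℝ :=
  (1 / (n : ℝ)) * ((univ.filter fun i => correct E h y yA yB i).card : ℝ)

/-! The classifier's decision between `yA` and `yB` is the sign of `⟪E yA - E yB, h i⟫`, so the
normalized direction `E yA - E yB` separates every correctly classified index; hence the
accuracy is at most the separability along that single direction. -/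

section Separability

variable {d n : ℕ} {V : Type*} [DecidableEq V]
  (h : Fin n → EuclideanSpace ℝ (Fin d)) (y : Fin n → V) (yA yB : V)

theorem sep_le_two (u : EuclideanSpace ℝ (Fin d)) : sep h y yA yB u ≤ 2 := by
  unfold sep
  rcases Nat.eq_zero_or_pos n with rfl | hn
  · simp
  calc (1 / (n : ℝ)) * (_ + _) ≤ (1 / (n : ℝ)) * (n + n) := by
        gcongr <;> exact (card_filter_le _ _).trans_eq (card_fin n)
    _ = 2 := by field_simp; ring

theorem bddAbove_sep_sphere :
    BddAbove {r : ℝ | ∃ u : EuclideanSpace ℝ (Fin d), ‖u‖ = 1 ∧ sep h y yA yB u = r} :=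
  ⟨2, by rintro r ⟨u, -, rfl⟩; exact sep_le_two h y yA yB u⟩

theorem sep_smul_of_pos {c : ℝ} (hc : 0 < c) (u : EuclideanSpace ℝ (Fin d)) :
    sep h y yA yB (c • u) = sep h y yA yB u := by
  simp only [sep, real_inner_smul_left, mul_nonneg_iff_of_pos_left hc,
    mul_neg_iff, hc, hc.not_gt, true_and, false_and, or_false]

end Separability

section Accuracy

variable {d n : ℕ} {V : Type*} (E : V → EuclideanSpace ℝ (Fin d))
  (h : Fin n → EuclideanSpace ℝ (Fin d)) (y : Fin n → V) (yA yB : V)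

theorem correct_imp_sign_inner_sub {i : Fin n} (hi : correct E h y yA yB i) :
    (y i = yA ∧ 0 ≤ inner ℝ (E yA - E yB) (h i)) ∨
      (y i = yB ∧ inner ℝ (E yA - E yB) (h i) < 0) := by
  rw [inner_sub_left]
  rcases hi with ⟨hA, hmax⟩ | ⟨hB, -, hlt⟩
  · exact .inl ⟨hA, sub_nonneg.mpr (hmax yB)⟩
  · exact .inr ⟨hB, sub_neg.mpr hlt⟩

theorem acc_le_sep_sub [Fintype V] [DecidableEq V] :
    acc E h y yA yB ≤ sep h y yA yB (E yA - E yB) := by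
  unfold acc sep
  gcongr
  calc ((univ.filter (correct E h y yA yB)).card : ℝ)
      ≤ (univ.filter fun i => (y i = yA ∧ 0 ≤ inner ℝ (E yA - E yB) (h i)) ∨
          (y i = yB ∧ inner ℝ (E yA - E yB) (h i) < 0)).card := by
        exact_mod_cast card_le_card (monotone_filter_right _
          fun _ _ => correct_imp_sign_inner_sub E h y yA yB)
    _ ≤ _ := by
        rw [filter_or]
        exact_mod_cast card_union_le _ _

end Accuracy

theorem stmt_3_general {d n : ℕ}
    {V : Type*} [Fintype V] [DecidableEq V]
    (E : V → EuclideanSpace ℝ (Fin d))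
    (h : Fin n → EuclideanSpace ℝ (Fin d)) (y : Fin n → V)
    (yA yB : V)
    (hE : E yA ≠ E yB) :
    acc E h y yA yB ≤
      sSup {r : ℝ | ∃ u : EuclideanSpace ℝ (Fin d), ‖u‖ = 1 ∧ sep h y yA yB u = r} := by
  have hw : E yA - E yB ≠ 0 := sub_ne_zero.mpr hE
  set u := ‖E yA - E yB‖⁻¹ • (E yA - E yB)
  have hu : ‖u‖ = 1 := norm_smul_inv_norm hw
  calc acc E h y yA yB ≤ sep h y yA yB (E yA - E yB) := acc_le_sep_sub E h y yA yB
    _ = sep h y yA yB u := (sep_smul_of_pos h y yA yB (inv_pos.mpr (norm_pos_iff.mpr hw)) _).symm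
    _ ≤ _ := le_csSup (bddAbove_sep_sphere h y yA yB) ⟨u, hu, rfl⟩

/-- (Theorem 1, inequality) If `E yA ≠ E yB`, then `Acc ≤ S*`, where
`S* = sup {S(u) | ‖u‖ = 1}` is the maximum separability. -/
theorem stmt_3 {d n : ℕ} (hd : 1 ≤ d) (hn : 1 ≤ n)
    {V : Type*} [Fintype V] [DecidableEq V]
    (E : V → EuclideanSpace ℝ (Fin d))
    (h : Fin n → EuclideanSpace ℝ (Fin d)) (y : Fin n → V)
    (yA yB : V) (hAB : yA ≠ yB) (hy : ∀ i, y i = yA ∨ y i = yB)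
    (hE : E yA ≠ E yB) :
    acc E h y yA yB ≤
      sSup {r : ℝ | ∃ u : EuclideanSpace ℝ (Fin d), ‖u‖ = 1 ∧ sep h y yA yB u = r} :=
  stmt_3_general E h y yA yB hE
end

section
/- (Theorem 1, equality case) Assume E y_A ≠ E y_B, assume that for every index i and every v ∈ V with v ∉ {y_A, y_B} one has ⟪E v, h i⟫ < max(⟪E y_A, h i⟫, ⟪E y_B, h i⟫), and assume the unit vector u₀ = (E y_A − E y_B)/‖E y_A − E y_B‖ attains the maximum separability, i.e. S(u₀) = S* (equivalently, u₀ is a positive scalar multiple of a maximizer u* of S). Then Acc = S*. -/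
open Finset

/-!
With `u₀ = ‖E yA - E yB‖⁻¹ • (E yA - E yB)`, the sign of `⟪u₀, h i⟫` is the sign of
`⟪E yA, h i⟫ - ⟪E yB, h i⟫`. Since no competitor token beats both label tokens, index `i` is
correctly classified exactly when its label is the one winning this two-way comparison, which is
exactly when `i` is counted by `S(u₀)`. Hence `Acc = S(u₀)`, and `S(u₀) = S*` by assumption.
-/

lemma forall_le_iff_of_lt_max {V α : Type*} [LinearOrder α] {f : V → α} {a b : V}
    (hf : ∀ v, v ≠ a → v ≠ b → f v < max (f a) (f b)) :
    (∀ v, f v ≤ f a) ↔ f b ≤ f a := by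
  refine ⟨fun hle => hle b, fun hba v => ?_⟩
  by_cases hva : v = a
  · rw [hva]
  by_cases hvb : v = b
  · rwa [hvb]
  exact (hf v hva hvb).le.trans (max_eq_left hba).le

lemma real_inner_inv_norm_smul_nonneg_iff {F : Type*} [NormedAddCommGroup F]
    [InnerProductSpace ℝ F] (w x : F) :
    0 ≤ inner ℝ (‖w‖⁻¹ • w) x ↔ 0 ≤ inner ℝ w x := by
  rcases eq_or_ne w 0 with rfl | hw
  · simp
  rw [real_inner_smul_left, mul_nonneg_iff_of_pos_left (inv_pos.mpr (norm_pos_iff.mpr hw))]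

lemma card_filter_or_not {ι : Type*} [DecidableEq ι] (s : Finset ι) (p q r : ι → Prop)
    [DecidablePred p] [DecidablePred q] [DecidablePred r] :
    (s.filter fun i => p i ∧ r i ∨ q i ∧ ¬ r i).card =
      (s.filter fun i => p i ∧ r i).card + (s.filter fun i => q i ∧ ¬ r i).card := by
  rw [filter_or, card_union_of_disjoint]
  exact disjoint_filter.mpr fun _ _ hpr hqr => hqr.2 hpr.2

section Classification

variable {d n : ℕ} {V : Type*} (E : V → EuclideanSpace ℝ (Fin d))
  (h : Fin n → EuclideanSpace ℝ (Fin d)) (y : Fin n → V) (yA yB : V)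

lemma correct_iff_of_lt_max {i : Fin n}
    (hdom : ∀ v : V, v ≠ yA → v ≠ yB →
      (inner ℝ (E v) (h i) : ℝ) < max (inner ℝ (E yA) (h i) : ℝ) (inner ℝ (E yB) (h i) : ℝ)) :
    correct E h y yA yB i ↔
      (y i = yA ∧ 0 ≤ (inner ℝ (E yA - E yB) (h i) : ℝ)) ∨
        (y i = yB ∧ ¬ 0 ≤ (inner ℝ (E yA - E yB) (h i) : ℝ)) := by
  have hdom' : ∀ v : V, v ≠ yB → v ≠ yA →
      (inner ℝ (E v) (h i) : ℝ) < max (inner ℝ (E yB) (h i) : ℝ) (inner ℝ (E yA) (h i) : ℝ) :=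
    fun v hvB hvA => max_comm (α := ℝ) _ _ ▸ hdom v hvA hvB
  rw [correct, forall_le_iff_of_lt_max (f := fun v => (inner ℝ (E v) (h i) : ℝ)) hdom,
    forall_le_iff_of_lt_max (f := fun v => (inner ℝ (E v) (h i) : ℝ)) hdom', inner_sub_left,
    sub_nonneg, not_le]
  constructor
  · rintro (hA | ⟨hyi, -, hlt⟩)
    exacts [Or.inl hA, Or.inr ⟨hyi, hlt⟩]
  · rintro (hA | ⟨hyi, hlt⟩)
    exacts [Or.inl hA, Or.inr ⟨hyi, hlt.le, hlt⟩]

variable [Fintype V] [DecidableEq V]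

lemma acc_eq_sep_of_lt_max
    (hdom : ∀ i : Fin n, ∀ v : V, v ≠ yA → v ≠ yB →
      (inner ℝ (E v) (h i) : ℝ) < max (inner ℝ (E yA) (h i) : ℝ) (inner ℝ (E yB) (h i) : ℝ)) :
    acc E h y yA yB = sep h y yA yB (‖E yA - E yB‖⁻¹ • (E yA - E yB)) := by
  simp only [acc, sep, ← not_le, real_inner_inv_norm_smul_nonneg_iff]
  rw [← Nat.cast_add, ← card_filter_or_not]
  congr 3
  exact filter_congr fun i _ => correct_iff_of_lt_max E h y yA yB (hdom i)

end Classification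

theorem stmt_4_general {d n : ℕ}
    {V : Type*} [Fintype V] [DecidableEq V]
    (E : V → EuclideanSpace ℝ (Fin d))
    (h : Fin n → EuclideanSpace ℝ (Fin d)) (y : Fin n → V)
    (yA yB : V)
    (hdom : ∀ i : Fin n, ∀ v : V, v ≠ yA → v ≠ yB →
      (inner ℝ (E v) (h i) : ℝ) <
        max (inner ℝ (E yA) (h i) : ℝ) (inner ℝ (E yB) (h i) : ℝ))
    (hatt : sep h y yA yB (‖E yA - E yB‖⁻¹ • (E yA - E yB)) =
      sSup {r : ℝ | ∃ u : EuclideanSpace ℝ (Fin d), ‖u‖ = 1 ∧ sep h y yA yB u = r}) :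
    acc E h y yA yB =
      sSup {r : ℝ | ∃ u : EuclideanSpace ℝ (Fin d), ‖u‖ = 1 ∧ sep h y yA yB u = r} :=
  (acc_eq_sep_of_lt_max E h y yA yB hdom).trans hatt

/-- (Theorem 1, equality case) Assume `E yA ≠ E yB`, assume every competitor token `v`
outside `{yA, yB}` satisfies `⟪E v, h i⟫ < max (⟪E yA, h i⟫) (⟪E yB, h i⟫)` for every `i`,
and assume the unit vector `u₀ = (E yA − E yB)/‖E yA − E yB‖` attains the maximum
separability `S* = sup {S(u) | ‖u‖ = 1}`.  Then `Acc = S*`. -/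
theorem stmt_4 {d n : ℕ} (hd : 1 ≤ d) (hn : 1 ≤ n)
    {V : Type*} [Fintype V] [DecidableEq V]
    (E : V → EuclideanSpace ℝ (Fin d))
    (h : Fin n → EuclideanSpace ℝ (Fin d)) (y : Fin n → V)
    (yA yB : V) (hAB : yA ≠ yB) (hy : ∀ i, y i = yA ∨ y i = yB)
    (hE : E yA ≠ E yB)
    (hdom : ∀ i : Fin n, ∀ v : V, v ≠ yA → v ≠ yB →
      (inner ℝ (E v) (h i) : ℝ) <
        max (inner ℝ (E yA) (h i) : ℝ) (inner ℝ (E yB) (h i) : ℝ))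
    (hatt : sep h y yA yB (‖E yA - E yB‖⁻¹ • (E yA - E yB)) =
      sSup {r : ℝ | ∃ u : EuclideanSpace ℝ (Fin d), ‖u‖ = 1 ∧ sep h y yA yB u = r}) :
    acc E h y yA yB =
      sSup {r : ℝ | ∃ u : EuclideanSpace ℝ (Fin d), ‖u‖ = 1 ∧ sep h y yA yB u = r} :=
  stmt_4_general E h y yA yB hdom hatt
end
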